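/- Let f : ℝ → ℝ be continuous with f^inf ≤ f(x) ≤ f^sup for positive constants f^inf ≤ f^sup, let λ : [0,∞) → [0, λ^sup] be continuous, let g : ℝ → ℝ be continuous with 0 ≤ g(x) ≤ g^sup, let η̃ > 0 and 0 ≤ η ≤ η^sup. Suppose x : [0,∞) → ℝ is differentiable, satisfies x'(t) = f(x(t)) + λ(t) - x(t)/(η̃ + η g(x(t))) for all t, and x(0) = x_initial with 0 < x_initial < (f^sup + λ^sup)(η̃ + η^sup g^sup). Then x(t) ≤ (f^sup + λ^sup)(η̃ + η^sup g^sup) for all t ≥ 0. -/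

import Mathlib

/-!
Above the level `M = (f^sup + λ^sup)(η̃ + η^sup g^sup)` the outflow `x / (η̃ + η g(x))` is at
least `x / (η̃ + η^sup g^sup) > f^sup + λ^sup`, so the trajectory is strictly decreasing there.
Hence it can never cross any barrier `M + ε`, and letting `ε → 0` gives `x ≤ M`.
-/

theorem le_of_hasDerivAt_neg_of_gt {x x' : ℝ → ℝ} {a M : ℝ}
    (hx : ∀ t, a ≤ t → HasDerivAt x (x' t) t) (ha : x a ≤ M)
    (hneg : ∀ t, a ≤ t → M < x t → x' t < 0) :
    ∀ t, a ≤ t → x t ≤ M := by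
  intro t ht
  refine le_of_forall_pos_le_add fun ε hε => ?_
  -- the fencing lemma needs strict decrease on the barrier: true at `M + ε`, not necessarily at `M`
  exact image_le_of_deriv_right_lt_deriv_boundary (B := fun _ => M + ε)
    (fun s hs => (hx s hs.1).continuousAt.continuousWithinAt)
    (fun s hs => (hx s hs.1).hasDerivWithinAt) (by linarith)
    (fun _ => hasDerivAt_const _ _)
    (fun s hs hxs => hneg s hs.1 (by linarith)) ⟨ht, le_rfl⟩

theorem sub_div_neg_of_le_of_mul_lt {a c d D y : ℝ} (ha : a ≤ c) (hc : 0 ≤ c) (hd : 0 < d)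
    (hdD : d ≤ D) (hy : c * D < y) : a - y / d < 0 := by
  have hcy : c < y / d := by
    rw [lt_div_iff₀ hd]
    nlinarith
  linarith

theorem userbase_upper_bound_general
    (f g lam x : ℝ → ℝ) (finf fsup lamsup gsup etaT eta etasup xinit : ℝ)
    (hfinf : 0 < finf)
    (hf_bdd : ∀ y, finf ≤ f y ∧ f y ≤ fsup)
    (hlam_bdd : ∀ t, 0 ≤ t → 0 ≤ lam t ∧ lam t ≤ lamsup)
    (hg_bdd : ∀ y, 0 ≤ g y ∧ g y ≤ gsup)
    (hetaT : 0 < etaT) (heta : 0 ≤ eta) (hetasup : eta ≤ etasup)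
    (hderiv : ∀ t, 0 ≤ t →
      HasDerivAt x (f (x t) + lam t - x t / (etaT + eta * g (x t))) t)
    (hx0 : x 0 = xinit)
    (hxinit_lt : xinit < (fsup + lamsup) * (etaT + etasup * gsup)) :
    ∀ t, 0 ≤ t → x t ≤ (fsup + lamsup) * (etaT + etasup * gsup) := by
  have hfsup : 0 ≤ fsup := by linarith [hf_bdd 0]
  have hlamsup : 0 ≤ lamsup := by linarith [hlam_bdd 0 le_rfl]
  refine le_of_hasDerivAt_neg_of_gt hderiv (hx0 ▸ hxinit_lt.le) fun t ht hxt => ?_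
  obtain ⟨hg_nonneg, hg_le⟩ := hg_bdd (x t)
  exact sub_div_neg_of_le_of_mul_lt (add_le_add (hf_bdd (x t)).2 (hlam_bdd t ht).2)
    (by positivity) (by positivity)
    (by gcongr; linarith [hg_nonneg.trans hg_le]) hxt

/-- Upper bound on any feasible user-base trajectory:
under the dynamics `x' = f(x) + λ(t) - x/(η̃ + η g(x))`, the trajectory stays
below `(f^sup + λ^sup)(η̃ + η^sup g^sup)`. -/
theorem userbase_upper_bound
    (f g lam x : ℝ → ℝ) (finf fsup lamsup gsup etaT eta etasup xinit : ℝ)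
    (hf_cont : Continuous f)
    (hfinf : 0 < finf) (hffs : finf ≤ fsup)
    (hf_bdd : ∀ y, finf ≤ f y ∧ f y ≤ fsup)
    (hlam_cont : Continuous lam)
    (hlam_bdd : ∀ t, 0 ≤ t → 0 ≤ lam t ∧ lam t ≤ lamsup)
    (hg_cont : Continuous g)
    (hg_bdd : ∀ y, 0 ≤ g y ∧ g y ≤ gsup)
    (hetaT : 0 < etaT) (heta : 0 ≤ eta) (hetasup : eta ≤ etasup)
    (hderiv : ∀ t, 0 ≤ t →
      HasDerivAt x (f (x t) + lam t - x t / (etaT + eta * g (x t))) t)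
    (hx0 : x 0 = xinit)
    (hxinit_pos : 0 < xinit)
    (hxinit_lt : xinit < (fsup + lamsup) * (etaT + etasup * gsup)) :
    ∀ t, 0 ≤ t → x t ≤ (fsup + lamsup) * (etaT + etasup * gsup) :=
  userbase_upper_bound_general f g lam x finf fsup lamsup gsup etaT eta etasup xinit hfinf hf_bdd
    hlam_bdd hg_bdd hetaT heta hetasup hderiv hx0 hxinit_lt
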